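/- arXiv:2605.03200 — 3 statements merged into one kernel-verified Lean document; each statement's English description precedes it below -/
import Mathlib

section
/- For integers N ≥ 1 and s ≥ 0, (1/(2^s · s!)) · U_{N+s-1}^{(s)}(z) = ∑_{j=0}^{⌊(N-1)/2⌋} (-1)^j · C(N-1+s-j, j) · C(N-1+s-2j, s) · 2^(N-1-2j) · z^(N-1-2j). -/
/-!
Expanding the three-term recurrence `U (n + 2) = 2 X U (n + 1) - U n` gives the classical formula
`U n = ∑ⱼ (-1)ʲ C(n - j, j) (2X)^(n - 2j)`, the recurrence for the coefficients being Pascal's rule.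
Differentiating `s` times turns `X ^ (m + s - 2j)` into `s! C(m + s - 2j, s) X ^ (m - 2j)`, and the
factor `2 ^ s` splits off from `2 ^ (m + s - 2j)`; the terms with `2j > m` vanish.
-/

open Polynomial Finset
open scoped Nat

namespace Polynomial.Chebyshev

variable (R : Type*) [CommRing R]

noncomputable def uTerm (n j : ℕ) : R[X] :=
  Polynomial.C ((-1) ^ j * ((n - j).choose j : R) * 2 ^ (n - 2 * j)) * X ^ (n - 2 * j)

theorem uTerm_eq_zero_of_lt {n j : ℕ} (h : n < 2 * j) : uTerm R n j = 0 := by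
  simp [uTerm, Nat.choose_eq_zero_of_lt (show n - j < j by omega)]

theorem uTerm_zero_succ (n : ℕ) : uTerm R (n + 1) 0 = 2 * X * uTerm R n 0 := by
  simp only [uTerm, pow_zero, one_mul, Nat.sub_zero, Nat.mul_zero, Nat.choose_zero_right,
    Nat.cast_one, pow_succ, map_mul, map_ofNat]
  ring

theorem uTerm_succ_succ (n j : ℕ) :
    uTerm R (n + 2) (j + 1) = 2 * X * uTerm R (n + 1) (j + 1) - uTerm R n j := by
  rcases lt_or_ge n (2 * j) with h | h
  · rw [uTerm_eq_zero_of_lt R (by omega : n + 2 < 2 * (j + 1)),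
      uTerm_eq_zero_of_lt R (by omega : n + 1 < 2 * (j + 1)), uTerm_eq_zero_of_lt R h]
    ring
  obtain ⟨k, rfl⟩ : ∃ k, n = 2 * j + k := ⟨n - 2 * j, by omega⟩
  rcases k with _ | k
  · rw [uTerm_eq_zero_of_lt R (by omega : 2 * j + 0 + 1 < 2 * (j + 1))]
    simp only [uTerm, show 2 * j + 0 + 2 - (j + 1) = j + 1 by omega,
      show 2 * j + 0 - j = j by omega, show 2 * j + 0 + 2 - 2 * (j + 1) = 0 by omega,
      show 2 * j + 0 - 2 * j = 0 by omega, Nat.choose_self, pow_zero, pow_succ, map_mul, map_neg,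
      map_one, Nat.cast_one]
    ring
  · simp only [uTerm, show 2 * j + (k + 1) + 2 - (j + 1) = j + k + 1 + 1 by omega,
      show 2 * j + (k + 1) + 1 - (j + 1) = j + k + 1 by omega,
      show 2 * j + (k + 1) - j = j + k + 1 by omega,
      show 2 * j + (k + 1) + 2 - 2 * (j + 1) = k + 1 by omega,
      show 2 * j + (k + 1) + 1 - 2 * (j + 1) = k by omega,
      show 2 * j + (k + 1) - 2 * j = k + 1 by omega, Nat.choose_succ_succ (j + k + 1) j,
      pow_succ, Nat.cast_add, map_mul, map_pow, map_neg, map_one, map_ofNat, map_add, map_natCast]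
    ring

theorem U_eq_sum_uTerm (n : ℕ) : U R n = ∑ j ∈ range (n + 1), uTerm R n j := by
  induction n using Nat.twoStepInduction with
  | zero => simp [uTerm]
  | one => simp [uTerm, sum_range_succ, ← C_ofNat]
  | more n ih₀ ih₁ =>
    have hU : U R ((n + 2 : ℕ) : ℤ) = 2 * X * U R ((n + 1 : ℕ) : ℤ) - U R (n : ℤ) := by
      push_cast
      exact U_add_two R n
    rw [hU, ih₀, ih₁, sum_range_succ' _ (n + 2), sum_range_succ' (uTerm R (n + 1)) (n + 1)]
    simp only [uTerm_succ_succ, uTerm_zero_succ, sum_sub_distrib, ← mul_sum]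
    rw [sum_range_succ (fun i ↦ uTerm R (n + 1) (i + 1)) (n + 1), sum_range_succ (uTerm R n) (n + 1),
      uTerm_eq_zero_of_lt R (by omega : n + 1 < 2 * (n + 1 + 1)),
      uTerm_eq_zero_of_lt R (by omega : n < 2 * (n + 1))]
    ring

theorem neg_one_pow_mul_choose_mul_choose_eq_zero {m s j : ℕ} (h : m < 2 * j) :
    (-1) ^ j * ((m + s - j).choose j : R) * ((m + s - 2 * j).choose s : R) = 0 := by
  rcases lt_or_ge (m + s) (2 * j) with h' | h'
  · rw [Nat.choose_eq_zero_of_lt (by omega : m + s - j < j)]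
    simp
  · rw [Nat.choose_eq_zero_of_lt (by omega : m + s - 2 * j < s)]
    simp

theorem iterate_derivative_uTerm (m s j : ℕ) :
    derivative^[s] (uTerm R (m + s) j) =
      Polynomial.C (2 ^ s * s ! : R) * (Polynomial.C ((-1) ^ j * ((m + s - j).choose j : R) *
        ((m + s - 2 * j).choose s : R) * 2 ^ (m - 2 * j)) * X ^ (m - 2 * j)) := by
  rw [uTerm, iterate_derivative_C_mul, iterate_derivative_X_pow_eq_C_mul,
    Nat.descFactorial_eq_factorial_mul_choose, ← mul_assoc, ← map_mul, ← mul_assoc (Polynomial.C _),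
    ← map_mul]
  rcases le_or_gt (2 * j) m with h | h
  · rw [show m + s - 2 * j = s + (m - 2 * j) by omega, Nat.add_sub_cancel_left, pow_add]
    push_cast
    ring_nf
  · have hzero := neg_one_pow_mul_choose_mul_choose_eq_zero R (s := s) h
    have hL : (-1) ^ j * ((m + s - j).choose j : R) * 2 ^ (m + s - 2 * j) *
        ((s ! * (m + s - 2 * j).choose s : ℕ) : R) = 0 := by
      push_cast
      linear_combination ((s ! : R) * 2 ^ (m + s - 2 * j)) * hzero
    have hR : (2 ^ s * s ! : R) * ((-1) ^ j * ((m + s - j).choose j : R) *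
        ((m + s - 2 * j).choose s : R) * 2 ^ (m - 2 * j)) = 0 := by
      linear_combination ((2 ^ s * s ! : R) * 2 ^ (m - 2 * j)) * hzero
    rw [hL, hR, map_zero, zero_mul, zero_mul]

theorem iterate_derivative_U_eq_sum (m s : ℕ) :
    derivative^[s] (U R (m + s : ℕ)) =
      Polynomial.C (2 ^ s * s ! : R) * ∑ j ∈ range (m / 2 + 1),
        Polynomial.C ((-1) ^ j * ((m + s - j).choose j : R) * ((m + s - 2 * j).choose s : R) *
          2 ^ (m - 2 * j)) * X ^ (m - 2 * j) := by
  rw [U_eq_sum_uTerm, iterate_derivative_sum, mul_sum]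
  simp only [iterate_derivative_uTerm]
  refine (sum_subset (range_subset_range.2 (by omega)) fun j _ hj ↦ ?_).symm
  have h : m < 2 * j := by simp at hj; omega
  rw [neg_one_pow_mul_choose_mul_choose_eq_zero R h, zero_mul, map_zero, zero_mul, mul_zero]

end Polynomial.Chebyshev

theorem stmt2 (N s : ℕ) (hN : 1 ≤ N) (z : ℂ) :
    (1 / (2 ^ s * s.factorial : ℂ)) *
        (Polynomial.derivative^[s] (Polynomial.Chebyshev.U ℂ (N + s - 1))).eval z =
      ∑ j ∈ Finset.range ((N - 1) / 2 + 1),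
        (-1 : ℂ) ^ j * ((N - 1 + s - j).choose j : ℂ) * ((N - 1 + s - 2 * j).choose s : ℂ) *
          2 ^ (N - 1 - 2 * j) * z ^ (N - 1 - 2 * j) := by
  obtain ⟨m, rfl⟩ : ∃ m, N = m + 1 := ⟨N - 1, by omega⟩
  have hidx : ((m + 1 : ℕ) : ℤ) + s - 1 = ((m + s : ℕ) : ℤ) := by push_cast; ring
  rw [hidx, Chebyshev.iterate_derivative_U_eq_sum, eval_mul, eval_C, ← mul_assoc, one_div,
    inv_mul_cancel₀ (mul_ne_zero (pow_ne_zero _ two_ne_zero)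
      (Nat.cast_ne_zero.2 s.factorial_ne_zero)), one_mul, eval_finsetSum, Nat.add_sub_cancel]
  simp [mul_assoc]
end

section
/- For every integer N ≥ 1 and every complex z with |z| < 1, the series ∑_{σ=0}^∞ z^σ · U_{N+σ-1}^{(σ)}(z) / (2^σ · σ!) converges to ∑_{j=0}^{⌊(N-1)/2⌋} (-1)^j · C(N-1-j, j) · (2z)^(N-1-2j) / (1-z)^(N-j). -/
/-!
Expand `U_n = ∑ⱼ (-1)ʲ C(n-j, j) (2X)^(n-2j)`. For `n = M + σ`, the `σ`-th Hasse derivative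
`D^σ/σ!` of the `j`-th term, evaluated at `z` and scaled by `(z/2)^σ`, is
`(-1)ʲ C(M-j, j) (2z)^(M-2j) · C(σ+M-j, M-j) z^σ` when `2j ≤ M` (the two binomials recombine by
`Nat.choose_mul`), and it vanishes when `2j > M`. Summing over `σ` first, the `j`-th term
contributes a negative binomial series `∑_σ C(σ+M-j, M-j) z^σ = (1-z)^-(M-j+1)`.
-/

open Polynomial Finset

namespace Polynomial

variable {R : Type*} [CommRing R]

theorem two_mul_X_mul_monomial (n : ℕ) (a : R) :
    2 * X * monomial n a = monomial (n + 1) (2 * a) := by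
  rw [mul_assoc, X_mul_monomial, ← C_ofNat, C_mul_monomial]

namespace Chebyshev

noncomputable def UMonomial (n j : ℕ) : R[X] :=
  monomial (n - 2 * j) ((-1) ^ j * (n - j).choose j * 2 ^ (n - 2 * j))

theorem UMonomial_eq_zero {n j : ℕ} (h : n < 2 * j) : (UMonomial n j : R[X]) = 0 := by
  simp [UMonomial, Nat.choose_eq_zero_of_lt (by omega : n - j < j)]

theorem UMonomial_add_two_zero (n : ℕ) :
    (UMonomial (n + 2) 0 : R[X]) = 2 * X * UMonomial (n + 1) 0 := by
  simp [UMonomial, two_mul_X_mul_monomial, pow_succ']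

theorem UMonomial_add_two_succ (n j : ℕ) :
    (UMonomial (n + 2) (j + 1) : R[X]) = 2 * X * UMonomial (n + 1) (j + 1) - UMonomial n j := by
  rcases lt_trichotomy n (2 * j) with h | rfl | h
  · rw [UMonomial_eq_zero h, UMonomial_eq_zero (by omega), UMonomial_eq_zero (by omega),
      mul_zero, sub_zero]
  · rw [UMonomial_eq_zero (n := 2 * j + 1) (by omega), mul_zero, zero_sub]
    simp [UMonomial, show 2 * j + 2 - (j + 1) = j + 1 by omega, show 2 * j - j = j by omega,
      show 2 * j + 2 - 2 * (j + 1) = 0 by omega, pow_succ]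
  · obtain ⟨l, rfl⟩ : ∃ l, n = 2 * j + 1 + l := ⟨n - (2 * j + 1), by omega⟩
    simp only [UMonomial, two_mul_X_mul_monomial,
      show 2 * j + 1 + l + 2 - 2 * (j + 1) = l + 1 by omega,
      show 2 * j + 1 + l + 1 - 2 * (j + 1) = l by omega,
      show 2 * j + 1 + l - 2 * j = l + 1 by omega,
      show 2 * j + 1 + l + 2 - (j + 1) = j + 1 + l + 1 by omega,
      show 2 * j + 1 + l + 1 - (j + 1) = j + 1 + l by omega,
      show 2 * j + 1 + l - j = j + 1 + l by omega, Nat.choose_succ_succ']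
    rw [← map_sub]
    congr 1
    push_cast
    ring

theorem U_natCast_eq_sum_UMonomial (n : ℕ) : U R n = ∑ j ∈ range (n + 1), UMonomial n j := by
  induction n using Nat.twoStepInduction with
  | zero => simp [UMonomial]
  | one => simp [UMonomial, sum_range_succ, ← C_mul_X_eq_monomial, C_ofNat]
  | more n ih₀ ih₁ =>
    rw [show ((n + 2 : ℕ) : ℤ) = n + 2 by push_cast; ring, U_add_two,
      show (n : ℤ) + 1 = (n + 1 : ℕ) by push_cast; ring, ih₀, ih₁,
      sum_range_succ' _ (n + 2), sum_range_succ' _ (n + 1)]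
    simp only [UMonomial_add_two_succ, sum_sub_distrib, UMonomial_add_two_zero]
    rw [sum_range_succ _ (n + 1), sum_range_succ (UMonomial n) (n + 1),
      UMonomial_eq_zero (n := n) (j := n + 1) (by omega),
      UMonomial_eq_zero (n := n + 1) (j := n + 2) (by omega), mul_add, mul_sum]
    ring

theorem hasseDeriv_UMonomial_eq_zero {M σ j : ℕ} (h : M < 2 * j) :
    hasseDeriv σ (UMonomial (M + σ) j : R[X]) = 0 := by
  rcases σ.eq_zero_or_pos with rfl | hσ
  · rw [hasseDeriv_zero', add_zero, UMonomial_eq_zero h]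
  · rw [UMonomial, hasseDeriv_monomial, Nat.choose_eq_zero_of_lt (by omega : M + σ - 2 * j < σ),
      Nat.cast_zero, zero_mul, monomial_zero_right]

theorem hasseDeriv_UMonomial (i j σ : ℕ) :
    hasseDeriv σ (UMonomial (i + 2 * j + σ) j : R[X]) =
      monomial i ((-1) ^ j * (i + j).choose j * (i + j + σ).choose (i + j) * 2 ^ (i + σ) : R) := by
  have key := Nat.choose_mul (n := i + j + σ) (k := i + j) (s := j) (by omega)
  rw [show i + j + σ - j = i + σ by omega, Nat.add_sub_cancel] at key
  rw [UMonomial, hasseDeriv_monomial, show i + 2 * j + σ - 2 * j = i + σ by omega,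
    show i + 2 * j + σ - j = i + j + σ by omega, Nat.add_sub_cancel, ← Nat.choose_symm_add]
  congr 1
  have key' := congrArg (Nat.cast : ℕ → R) key
  push_cast at key'
  linear_combination (-(-1) ^ j * 2 ^ (i + σ) : R) * key'

variable {K : Type*} [Field K] [CharZero K]

theorem pow_mul_eval_iterate_derivative_U_div_eq_sum (M σ : ℕ) (z : K) :
    z ^ σ * (derivative^[σ] (U K (M + σ : ℕ))).eval z / (2 ^ σ * σ.factorial) =
      ∑ j ∈ range (M / 2 + 1), (-1) ^ j * ((M - j).choose j : K) * (2 * z) ^ (M - 2 * j) *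
        (((σ + (M - j)).choose (M - j) : K) * z ^ σ) := by
  rw [← factorial_smul_hasseDeriv, LinearMap.smul_apply, eval_smul, nsmul_eq_mul,
    U_natCast_eq_sum_UMonomial, map_sum, eval_finsetSum,
    ← sum_subset (range_subset_range.2 (by omega : M / 2 + 1 ≤ M + σ + 1)) fun j _ hj => by
      rw [hasseDeriv_UMonomial_eq_zero (by rw [mem_range] at hj; omega), eval_zero],
    mul_sum, mul_sum, sum_div]
  refine sum_congr rfl fun j hj => ?_
  have hj : 2 * j ≤ M := by rw [mem_range] at hj; omega
  rw [show M + σ = M - 2 * j + 2 * j + σ by omega, hasseDeriv_UMonomial, eval_monomial,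
    show M - j = M - 2 * j + j by omega, add_comm σ]
  have : (σ.factorial : K) ≠ 0 := Nat.cast_ne_zero.2 σ.factorial_ne_zero
  field_simp
  ring

end Chebyshev

end Polynomial

theorem stmt5 (N : ℕ) (hN : 1 ≤ N) (z : ℂ) (hz : ‖z‖ < 1) :
    HasSum
      (fun σ : ℕ =>
        z ^ σ * (Polynomial.derivative^[σ] (Polynomial.Chebyshev.U ℂ (N + σ - 1))).eval z /
          (2 ^ σ * σ.factorial))
      (∑ j ∈ Finset.range ((N - 1) / 2 + 1),
        (-1 : ℂ) ^ j * ((N - 1 - j).choose j : ℂ) * (2 * z) ^ (N - 1 - 2 * j) /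
          (1 - z) ^ (N - j)) := by
  obtain ⟨M, rfl⟩ : ∃ M, N = M + 1 := ⟨N - 1, by omega⟩
  have hidx (σ : ℕ) : ((M + 1 : ℕ) : ℤ) + σ - 1 = ((M + σ : ℕ) : ℤ) := by push_cast; ring
  simp only [hidx, Chebyshev.pow_mul_eval_iterate_derivative_U_div_eq_sum, Nat.add_sub_cancel]
  refine hasSum_sum fun j hj => ?_
  rw [show M + 1 - j = M - j + 1 by rw [mem_range] at hj; omega, div_eq_mul_one_div]
  exact (hasSum_choose_mul_geometric_of_norm_lt_one (M - j) hz).mul_left _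
end

section
/- For every odd integer k ≥ 1 and integer N ≥ 1, F_{Nk}/F_k = (-i)^(N-1) · U_{N-1}((i/2)·L_k), and for every even integer k ≥ 2 and N ≥ 1, F_{Nk}/F_k = U_{N-1}((1/2)·L_k). -/
/-!
Binet's formulas `F n = (φ ^ n - ψ ^ n) / √5` and `L n = φ ^ n + ψ ^ n`, together with
`φ ψ = -1`, give `F (m + 2k) = L k * F (m + k) - (-1) ^ k * F m`. Hence the quotients
`a n = F ((n + 1) k) / F k` satisfy `a (n + 2) = L k * a (n + 1) - (-1) ^ k * a n` with `a 0 = 1`,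
`a 1 = L k`, and any such sequence is `q ^ n * U n (c)` as soon as `2 q c = L k` and
`q ^ 2 = (-1) ^ k`: take `q = 1` for even `k` and `q = -i` for odd `k`.
-/

/-- The Lucas numbers: `L_0 = 2`, `L_1 = 1`, `L_{n+2} = L_{n+1} + L_n`
(so `L_1 = 1`, `L_2 = 3`). -/
def lucas : ℕ → ℕ
  | 0 => 2
  | 1 => 1
  | n + 2 => lucas (n + 1) + lucas n

open Polynomial Polynomial.Chebyshev goldenRatio

theorem Polynomial.Chebyshev.eq_pow_mul_U_eval_of_recurrence {R : Type*} [CommRing R]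
    (q c : R) (s : ℕ → R) (h0 : s 0 = 1) (h1 : s 1 = 2 * q * c)
    (hrec : ∀ n, s (n + 2) = 2 * q * c * s (n + 1) - q ^ 2 * s n) :
    ∀ n : ℕ, s n = q ^ n * (U R n).eval c
  | 0 => by simp [h0]
  | 1 => by simp [h1]; ring
  | n + 2 => by
    rw [hrec, eq_pow_mul_U_eval_of_recurrence q c s h0 h1 hrec (n + 1),
      eq_pow_mul_U_eval_of_recurrence q c s h0 h1 hrec n]
    push_cast
    simp only [U_add_two, eval_sub, eval_mul, eval_ofNat, eval_X]
    ring

theorem coe_lucas_eq : ∀ n, (lucas n : ℝ) = φ ^ n + ψ ^ n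
  | 0 => by norm_num [lucas]
  | 1 => by simp [lucas, Real.goldenRatio_add_goldenConj]
  | n + 2 => by
    rw [lucas, Nat.cast_add, coe_lucas_eq (n + 1), coe_lucas_eq n]
    linear_combination (-φ ^ n) * Real.goldenRatio_sq - ψ ^ n * Real.goldenConj_sq

theorem fib_add_two_mul (m k : ℕ) :
    (Nat.fib (m + 2 * k) : ℤ) = lucas k * Nat.fib (m + k) - (-1) ^ k * Nat.fib m := by
  suffices (Nat.fib (m + 2 * k) : ℝ) = lucas k * Nat.fib (m + k) - (-1) ^ k * Nat.fib m by
    exact_mod_cast this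
  rw [← Real.goldenRatio_mul_goldenConj, mul_pow, coe_lucas_eq, Real.coe_fib_eq, Real.coe_fib_eq,
    Real.coe_fib_eq]
  ring

theorem fib_succ_mul_div_fib_eq_pow_mul_U_eval {K : Type*} [Field K] [CharZero K] {k : ℕ}
    (hk : k ≠ 0) (q c : K) (hqc : 2 * q * c = lucas k) (hq : q ^ 2 = (-1) ^ k) (n : ℕ) :
    (Nat.fib ((n + 1) * k) : K) / Nat.fib k = q ^ n * (U K n).eval c := by
  have hfib : (Nat.fib k : K) ≠ 0 := by simpa [Nat.fib_eq_zero] using hk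
  have hstep (n : ℕ) : (Nat.fib ((n + 2) * k) : K) =
      lucas k * Nat.fib ((n + 1) * k) - (-1) ^ k * Nat.fib (n * k) := by
    have := fib_add_two_mul (n * k) k
    rw [show n * k + 2 * k = (n + 2) * k by ring, show n * k + k = (n + 1) * k by ring] at this
    exact_mod_cast this
  refine eq_pow_mul_U_eval_of_recurrence q c (fun n ↦ (Nat.fib ((n + 1) * k) : K) / Nat.fib k)
    (by simp [hfib]) ?_ (fun n ↦ ?_) n
  · rw [hqc, div_eq_iff hfib]
    simpa using hstep 0
  · simp only [hqc, hq]
    rw [hstep (n + 1)]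
    ring

theorem stmt10 (N k : ℕ) (hN : 1 ≤ N) (hk : 1 ≤ k) :
    (Odd k →
      (Nat.fib (N * k) : ℂ) / (Nat.fib k : ℂ) =
        (-Complex.I) ^ (N - 1) *
          (Polynomial.Chebyshev.U ℂ (N - 1)).eval (Complex.I / 2 * (lucas k : ℂ))) ∧
    (Even k →
      (Nat.fib (N * k) : ℂ) / (Nat.fib k : ℂ) =
        (Polynomial.Chebyshev.U ℂ (N - 1)).eval ((lucas k : ℂ) / 2)) := by
  obtain ⟨n, rfl⟩ : ∃ n, N = n + 1 := ⟨N - 1, by omega⟩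
  have hk0 : k ≠ 0 := by omega
  simp only [add_tsub_cancel_right, Nat.cast_add_one]
  refine ⟨fun hodd ↦ ?_, fun heven ↦ ?_⟩
  · refine fib_succ_mul_div_fib_eq_pow_mul_U_eval hk0 (-Complex.I) _ ?_ ?_ n
    · linear_combination (-(lucas k : ℂ)) * Complex.I_sq
    · rw [hodd.neg_one_pow, neg_sq, Complex.I_sq]
  · simpa using fib_succ_mul_div_fib_eq_pow_mul_U_eval hk0 (1 : ℂ) (lucas k / 2) (by ring)
      (by rw [heven.neg_one_pow, one_pow]) n
end
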